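/- If x_c = y_c = 0, then all four roots of f(λ) = det(λH + S) are real: −a² is a root of multiplicity at least 2, and the other two roots are λ_± = (c² − r² + z_c² ± √((c² − r² + z_c²)² + 4c²r²))/2, which are real and distinct with λ_+ > 0 and λ_− < 0. -/

import Mathlib

open Matrix Polynomial

noncomputable def Hmat (a c : ℝ) : Matrix (Fin 4) (Fin 4) ℝ :=
  !![1/a^2, 0, 0, 0; 0, 1/a^2, 0, 0; 0, 0, -(1/c^2), 0; 0, 0, 0, -1]

noncomputable def Smat (r xc yc zc : ℝ) : Matrix (Fin 4) (Fin 4) ℝ :=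
  !![1, 0, 0, -xc; 0, 1, 0, -yc; 0, 0, 1, -zc;
     -xc, -yc, -zc, xc^2 + yc^2 + zc^2 - r^2]

/-- `f(λ) = det (λ H + S)` as a function of `λ`. -/
noncomputable def fval (a c r xc yc zc l : ℝ) : ℝ :=
  (l • Hmat a c + Smat r xc yc zc).det

/-- `f(λ) = det (λ H + S)` as a polynomial in `λ`. -/
noncomputable def fpoly (a c r xc yc zc : ℝ) : Polynomial ℝ :=
  ((X : Polynomial ℝ) • (Hmat a c).map C + (Smat r xc yc zc).map C).det

/-! For a sphere centred on the symmetry axis the pencil `λ H + S` is block diagonal: the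
`x`- and `y`-rows contribute the factor `(λ/a² + 1)²`, and the `(z, w)` block contributes a
quadratic whose roots have product `-c²r² < 0`, hence are real, of opposite signs and distinct. -/

lemma eval_fpoly (a c r xc yc zc l : ℝ) :
    (fpoly a c r xc yc zc).eval l = fval a c r xc yc zc l := by
  rw [fpoly, fval, ← coe_evalRingHom, RingHom.map_det]
  congr 1
  ext i j
  simpa using mul_comm _ _

lemma fval_of_center_on_axis {a c : ℝ} (ha : a ≠ 0) (hc : c ≠ 0) (r zc l : ℝ) :
    fval a c r 0 0 zc l =
      (l + a^2)^2 * (l^2 - (c^2 - r^2 + zc^2) * l - c^2 * r^2) / (a^4 * c^2) := by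
  simp [fval, Hmat, Smat, det_succ_row_zero, Fin.sum_univ_succ]
  field_simp
  ring

lemma fpoly_of_center_on_axis {a c : ℝ} (ha : a ≠ 0) (hc : c ≠ 0) (r zc : ℝ) :
    fpoly a c r 0 0 zc = C (1 / (a^4 * c^2)) * (X - C (-a^2))^2 *
      (X^2 - C (c^2 - r^2 + zc^2) * X - C (c^2 * r^2)) := by
  refine Polynomial.funext fun l => ?_
  simp [eval_fpoly, fval_of_center_on_axis ha hc]
  ring

lemma root_of_sq_eq_discrim {B D s : ℝ} (hs : s^2 = B^2 + 4 * D) :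
    ((B + s) / 2)^2 - B * ((B + s) / 2) - D = 0 := by
  linear_combination hs / 4

lemma abs_lt_sqrt_sq_add {B D : ℝ} (hD : 0 < D) : |B| < √(B^2 + D) :=
  Real.lt_sqrt (abs_nonneg B) |>.mpr (by rw [sq_abs]; linarith)

theorem stmt5 (a c r zc : ℝ) (ha : 0 < a) (hc : 0 < c) (hr : 0 < r) :
    2 ≤ (fpoly a c r 0 0 zc).rootMultiplicity (-a^2) ∧
    (let lp : ℝ := (c^2 - r^2 + zc^2 + Real.sqrt ((c^2 - r^2 + zc^2)^2 + 4*c^2*r^2)) / 2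
     let lm : ℝ := (c^2 - r^2 + zc^2 - Real.sqrt ((c^2 - r^2 + zc^2)^2 + 4*c^2*r^2)) / 2
     fval a c r 0 0 zc lp = 0 ∧ fval a c r 0 0 zc lm = 0 ∧
       0 < lp ∧ lm < 0 ∧ lm ≠ lp) := by
  have hfac := fpoly_of_center_on_axis ha.ne' hc.ne' r zc
  constructor
  · have hne : fpoly a c r 0 0 zc ≠ 0 := fun h => by
      simpa [eval_fpoly, fval_of_center_on_axis ha.ne' hc.ne', hr.ne', hc.ne', ha.ne'] using
        congrArg (eval 0) h
    exact (le_rootMultiplicity_iff hne).mpr (hfac ▸ dvd_mul_of_dvd_left (dvd_mul_left _ _) _)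
  · dsimp only
    set B := c^2 - r^2 + zc^2
    set s := √(B^2 + 4*c^2*r^2)
    have hs : s^2 = B^2 + 4 * (c^2 * r^2) := by rw [Real.sq_sqrt (by positivity)]; ring
    have hBs : |B| < s := abs_lt_sqrt_sq_add (by positivity)
    have hroot : ∀ l, l^2 - B * l - c^2 * r^2 = 0 → fval a c r 0 0 zc l = 0 := fun l hl => by
      rw [fval_of_center_on_axis ha.ne' hc.ne', hl, mul_zero, zero_div]
    have hroot_neg := root_of_sq_eq_discrim (B := B) (s := -s) (by rwa [neg_sq])
    rw [← sub_eq_add_neg] at hroot_neg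
    refine ⟨hroot _ (root_of_sq_eq_discrim hs), hroot _ hroot_neg, ?_, ?_, ?_⟩
    all_goals linarith [abs_lt.mp hBs]
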